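/- arXiv:1905.07564 — 3 statements merged into one kernel-verified Lean document; each statement's English description precedes it below -/
import Mathlib

section
/- Let U = U(X) and V = V(X) be square-integrable functions of a vector X = (X₁,...,Xₙ) of independent random variables. Then for any α ∈ [0,1], Cov(U,V) = E[ Σ_{i=1}^n 𝔇_i U · 𝔇_i^(α) V ], where 𝔇_i^(α)V = α E[𝔇_i V | 𝓕_i] + (1−α) E[𝔇_i V | 𝓖_i]. -/
open MeasureTheory Real

noncomputable def Ek {n : ℕ} {Ω : Fin n → Type*} [∀ i, MeasurableSpace (Ω i)]
    (μ : ∀ i, Measure (Ω i)) (k : Fin n) (U : (∀ i, Ω i) → ℝ) : (∀ i, Ω i) → ℝ :=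
  fun ω => ∫ x, U (Function.update ω k x) ∂(μ k)

noncomputable def Dop {n : ℕ} {Ω : Fin n → Type*} [∀ i, MeasurableSpace (Ω i)]
    (μ : ∀ i, Measure (Ω i)) (k : Fin n) (U : (∀ i, Ω i) → ℝ) : (∀ i, Ω i) → ℝ :=
  fun ω => U ω - Ek μ k U ω

/-- The σ-field `𝓕_k = σ(X_i, i ≤ k)` of the coordinates up to `k`. -/
def Fsig {n : ℕ} (Ω : Fin n → Type*) [∀ i, MeasurableSpace (Ω i)] (k : Fin n) :
    MeasurableSpace (∀ i, Ω i) :=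
  MeasurableSpace.comap (fun ω (i : {j : Fin n // j ≤ k}) => ω i.1) MeasurableSpace.pi

/-- The σ-field `𝓖_k = σ(X_i, i ≥ k)` of the coordinates from `k` on. -/
def Gsig {n : ℕ} (Ω : Fin n → Type*) [∀ i, MeasurableSpace (Ω i)] (k : Fin n) :
    MeasurableSpace (∀ i, Ω i) :=
  MeasurableSpace.comap (fun ω (i : {j : Fin n // k ≤ j}) => ω i.1) MeasurableSpace.pi

/-- `𝔇_k^(α) U = α E[𝔇_k U | 𝓕_k] + (1-α) E[𝔇_k U | 𝓖_k]`. -/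
noncomputable def Dalpha {n : ℕ} {Ω : Fin n → Type*} [∀ i, MeasurableSpace (Ω i)]
    (μ : ∀ i, Measure (Ω i)) (α : ℝ) (k : Fin n) (U : (∀ i, Ω i) → ℝ) : (∀ i, Ω i) → ℝ :=
  fun ω => α * ((Measure.pi μ)[Dop μ k U | Fsig Ω k]) ω
    + (1 - α) * ((Measure.pi μ)[Dop μ k U | Gsig Ω k]) ω

section CovHelpers

variable {n : ℕ} {Ω : Fin n → Type*} [∀ i, MeasurableSpace (Ω i)]

/-- Merge two configurations: coordinates in `p` from `ω`, the rest from `η`. -/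
def mrg (p : Fin n → Prop) [DecidablePred p] (ω η : ∀ i, Ω i) : ∀ i, Ω i :=
  fun i => if p i then ω i else η i

variable (μ : ∀ i, Measure (Ω i))

/-- Integrate out the coordinates outside `p`. -/
noncomputable def Qp (p : Fin n → Prop) [DecidablePred p] (f : (∀ i, Ω i) → ℝ) :
    (∀ i, Ω i) → ℝ :=
  fun ω => ∫ η, f (mrg p ω η) ∂(Measure.pi μ)

variable {p q : Fin n → Prop} [DecidablePred p] [DecidablePred q]
variable {f g : (∀ i, Ω i) → ℝ}

lemma measurable_mrg_pair :
    Measurable (fun z : (∀ i, Ω i) × (∀ i, Ω i) => mrg p z.1 z.2) := by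
  apply measurable_pi_lambda
  intro i
  by_cases h : p i
  · simp only [mrg, if_pos h]; exact (measurable_pi_apply i).comp measurable_fst
  · simp only [mrg, if_neg h]; exact (measurable_pi_apply i).comp measurable_snd

lemma measurable_mrg_right (ω : ∀ i, Ω i) : Measurable (fun η => mrg p ω η) := by
  apply measurable_pi_lambda
  intro i
  by_cases h : p i
  · simpa only [mrg, if_pos h] using measurable_const
  · simpa only [mrg, if_neg h] using measurable_pi_apply i

lemma mrg_mrg_same (ω η ζ : ∀ i, Ω i) : mrg p (mrg p ω η) ζ = mrg p ω ζ :=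
  funext fun i => by by_cases h : p i <;> simp [mrg, h]

lemma mrg_assoc (ω η ζ : ∀ i, Ω i) :
    mrg q (mrg p ω η) ζ = mrg (fun i => p i ∧ q i) ω (mrg q η ζ) :=
  funext fun i => by by_cases hq : q i <;> by_cases hp : p i <;> simp [mrg, hq, hp]

lemma mrg_congr (h : ∀ i, p i ↔ q i) : (mrg (Ω := Ω) p) = mrg q :=
  funext fun ω => funext fun η => funext fun i => if_congr (h i) rfl rfl

lemma Qp_congr (h : ∀ i, p i ↔ q i) (f : (∀ i, Ω i) → ℝ) : Qp μ p f = Qp μ q f := by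
  unfold Qp; rw [mrg_congr h]

variable [∀ i, IsProbabilityMeasure (μ i)]

lemma Qp_top (h : ∀ i, p i) : Qp μ p f = f := by
  funext ω
  have hm : ∀ η, mrg (Ω := Ω) p ω η = ω := fun η => funext fun i => if_pos (h i)
  simp [Qp, hm]

lemma Qp_bot (h : ∀ i, ¬ p i) : Qp μ p f = fun _ => ∫ η, f η ∂(Measure.pi μ) := by
  funext ω
  have hm : ∀ η, mrg (Ω := Ω) p ω η = η := fun η => funext fun i => if_neg (h i)
  simp [Qp, hm]

lemma Qp_proj (ω η : ∀ i, Ω i) : Qp μ p f (mrg p ω η) = Qp μ p f ω := by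
  unfold Qp
  simp only [mrg_mrg_same]

lemma mp_mrg : MeasurePreserving (fun z : (∀ i, Ω i) × (∀ i, Ω i) => mrg p z.1 z.2)
    ((Measure.pi μ).prod (Measure.pi μ)) (Measure.pi μ) := by
  refine ⟨measurable_mrg_pair, ?_⟩
  refine (Measure.pi_eq (μ := μ) fun s hs => ?_).symm
  rw [Measure.map_apply measurable_mrg_pair (MeasurableSet.univ_pi hs)]
  have hpre : (fun z : (∀ i, Ω i) × (∀ i, Ω i) => mrg p z.1 z.2) ⁻¹' Set.pi Set.univ s =
      (Set.pi Set.univ fun i => if p i then s i else Set.univ) ×ˢ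
        (Set.pi Set.univ fun i => if p i then Set.univ else s i) := by
    ext z
    simp only [Set.mem_preimage, Set.mem_pi, Set.mem_univ, forall_true_left, Set.mem_prod]
    constructor
    · intro h
      refine ⟨fun i => ?_, fun i => ?_⟩ <;> by_cases hi : p i
      · have := h i; simp only [mrg, if_pos hi] at this ⊢; exact this
      · simp only [if_neg hi]; trivial
      · simp only [if_pos hi]; trivial
      · have := h i; simp only [mrg, if_neg hi] at this ⊢; exact this
    · rintro ⟨h1, h2⟩ i
      by_cases hi : p i
      · have := h1 i; simpa only [mrg, if_pos hi] using this
      · have := h2 i; simpa only [mrg, if_neg hi] using this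
  rw [hpre, Measure.prod_prod, Measure.pi_pi, Measure.pi_pi, ← Finset.prod_mul_distrib]
  refine Finset.prod_congr rfl fun i _ => ?_
  by_cases hi : p i <;> simp [hi]

/-- Change of variables along a measure preserving map. -/
lemma integral_comp_mp {α β : Type*} [MeasurableSpace α] [MeasurableSpace β]
    {μa : Measure α} {μb : Measure β} {φ : α → β} (hφ : MeasurePreserving φ μa μb)
    {h : β → ℝ} (hm : AEStronglyMeasurable h μb) :
    ∫ x, h (φ x) ∂μa = ∫ y, h y ∂μb := by
  rw [← hφ.map_eq] at hm ⊢
  exact (integral_map hφ.measurable.aemeasurable hm).symm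

lemma sm_Qp (hfm : Measurable f) : StronglyMeasurable (Qp μ p f) :=
  ((hfm.comp measurable_mrg_pair).stronglyMeasurable).integral_prod_right'

lemma integrable_mrg_comp (hf : Integrable f (Measure.pi μ)) :
    Integrable (fun z : (∀ i, Ω i) × (∀ i, Ω i) => f (mrg p z.1 z.2))
      ((Measure.pi μ).prod (Measure.pi μ)) := by
  have h := (mp_mrg (μ := μ) (p := p)).map_eq
  rw [← h] at hf
  exact (integrable_map_measure hf.aestronglyMeasurable
    measurable_mrg_pair.aemeasurable).mp hf

lemma integrable_Qp (hf : Integrable f (Measure.pi μ)) :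
    Integrable (Qp μ p f) (Measure.pi μ) :=
  (integrable_mrg_comp μ hf).integral_prod_left

lemma ae_slice_integrable (hf : Integrable f (Measure.pi μ)) :
    ∀ᵐ ω ∂(Measure.pi μ), Integrable (fun η => f (mrg p ω η)) (Measure.pi μ) :=
  (integrable_mrg_comp μ hf).prod_right_ae

lemma integral_Qp (hf : Integrable f (Measure.pi μ)) :
    ∫ ω, Qp μ p f ω ∂(Measure.pi μ) = ∫ ω, f ω ∂(Measure.pi μ) := by
  have h1 : ∫ ω, f ω ∂(Measure.pi μ)
      = ∫ z, f (mrg p z.1 z.2) ∂((Measure.pi μ).prod (Measure.pi μ)) :=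
    (integral_comp_mp (mp_mrg μ) hf.aestronglyMeasurable).symm
  rw [h1, integral_prod _ (integrable_mrg_comp μ hf)]
  rfl

lemma Qp_sub (hf : Integrable f (Measure.pi μ)) (hg : Integrable g (Measure.pi μ)) :
    Qp μ p (fun ω => f ω - g ω) =ᵐ[Measure.pi μ]
      fun ω => Qp μ p f ω - Qp μ p g ω := by
  filter_upwards [ae_slice_integrable (p := p) μ hf, ae_slice_integrable (p := p) μ hg]
    with ω h1 h2
  simpa only [Qp] using integral_sub h1 h2

lemma Qp_comp (hfm : Measurable f) (hf : Integrable f (Measure.pi μ)) :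
    Qp μ p (Qp μ q f) =ᵐ[Measure.pi μ] Qp μ (fun i => p i ∧ q i) f := by
  filter_upwards [ae_slice_integrable (p := fun i => p i ∧ q i) μ hf] with ω hω
  have hstep : ∀ η, Qp μ q f (mrg p ω η)
      = ∫ ζ, f (mrg (fun i => p i ∧ q i) ω (mrg q η ζ)) ∂(Measure.pi μ) := by
    intro η
    unfold Qp
    simp only [mrg_assoc]
  calc Qp μ p (Qp μ q f) ω
      = ∫ η, ∫ ζ, f (mrg (fun i => p i ∧ q i) ω (mrg q η ζ)) ∂(Measure.pi μ)
          ∂(Measure.pi μ) := by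
        unfold Qp
        exact integral_congr_ae (Filter.Eventually.of_forall fun η => hstep η)
    _ = ∫ z, f (mrg (fun i => p i ∧ q i) ω (mrg q z.1 z.2))
          ∂((Measure.pi μ).prod (Measure.pi μ)) :=
        (integral_prod _ (integrable_mrg_comp (p := q) μ hω)).symm
    _ = ∫ ξ, f (mrg (fun i => p i ∧ q i) ω ξ) ∂(Measure.pi μ) :=
        integral_comp_mp (mp_mrg (p := q) μ) hω.aestronglyMeasurable
    _ = Qp μ (fun i => p i ∧ q i) f ω := rfl

lemma memL2_Qp (hfm : Measurable f) (hf2 : MemLp f 2 (Measure.pi μ)) :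
    MemLp (Qp μ p f) 2 (Measure.pi μ) := by
  have hsm : StronglyMeasurable (Qp μ p f) := sm_Qp μ hfm
  have hfsq : Integrable (fun ω => f ω ^ 2) (Measure.pi μ) := hf2.integrable_sq
  have hae : ∀ᵐ ω ∂(Measure.pi μ),
      ‖Qp μ p f ω ^ 2‖ ≤ Qp μ p (fun ω => f ω ^ 2) ω := by
    filter_upwards [ae_slice_integrable (p := p) μ hfsq] with ω hω
    have hg2 : MemLp (fun η => f (mrg p ω η)) 2 (Measure.pi μ) :=
      (memLp_two_iff_integrable_sq
        ((hfm.comp (measurable_mrg_right ω)).aestronglyMeasurable)).mpr hω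
    have hv := ProbabilityTheory.variance_nonneg (fun η => f (mrg p ω η)) (Measure.pi μ)
    rw [ProbabilityTheory.variance_eq_sub hg2] at hv
    simp only [Pi.pow_apply] at hv
    have h1 : ‖Qp μ p f ω ^ 2‖ = Qp μ p f ω ^ 2 := by
      rw [Real.norm_eq_abs, abs_of_nonneg (sq_nonneg _)]
    rw [h1]
    have h2 : Qp μ p (fun ω => f ω ^ 2) ω
        = ∫ η, f (mrg p ω η) ^ 2 ∂(Measure.pi μ) := rfl
    rw [h2]
    exact le_of_sub_nonneg hv
  refine (memLp_two_iff_integrable_sq hsm.aestronglyMeasurable).mpr ?_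
  exact Integrable.mono' (integrable_Qp (p := p) μ hfsq)
    (hsm.measurable.pow_const 2).aestronglyMeasurable hae

lemma mul_int {f g : (∀ i, Ω i) → ℝ} (h1 : MemLp f 2 (Measure.pi μ))
    (h2 : MemLp g 2 (Measure.pi μ)) :
    Integrable (fun ω => f ω * g ω) (Measure.pi μ) := by
  have h : MemLp (f • g) 1 (Measure.pi μ) :=
    MemLp.smul h2 h1
  have := memLp_one_iff_integrable.mp h
  exact this

lemma Qp_adj (hfm : Measurable f) (hgm : Measurable g)
    (hf2 : MemLp f 2 (Measure.pi μ)) (hg2 : MemLp g 2 (Measure.pi μ)) :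
    ∫ ω, f ω * Qp μ p g ω ∂(Measure.pi μ)
      = ∫ ω, Qp μ p f ω * Qp μ p g ω ∂(Measure.pi μ) := by
  have hQg2 : MemLp (Qp μ p g) 2 (Measure.pi μ) := memL2_Qp μ hgm hg2
  have hK : Integrable (fun ω => f ω * Qp μ p g ω) (Measure.pi μ) := mul_int μ hf2 hQg2
  have hKc : Integrable (fun z : (∀ i, Ω i) × (∀ i, Ω i) =>
      f (mrg p z.1 z.2) * Qp μ p g z.1) ((Measure.pi μ).prod (Measure.pi μ)) := by
    refine (integrable_mrg_comp (p := p) μ hK).congr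
      (Filter.Eventually.of_forall fun z => ?_)
    simp only
    rw [Qp_proj]
  calc ∫ ω, f ω * Qp μ p g ω ∂(Measure.pi μ)
      = ∫ z, f (mrg p z.1 z.2) * Qp μ p g (mrg p z.1 z.2)
          ∂((Measure.pi μ).prod (Measure.pi μ)) :=
        (integral_comp_mp (mp_mrg μ) hK.aestronglyMeasurable).symm
    _ = ∫ z, f (mrg p z.1 z.2) * Qp μ p g z.1
          ∂((Measure.pi μ).prod (Measure.pi μ)) := by
        refine integral_congr_ae (Filter.Eventually.of_forall fun z => ?_)
        simp only
        rw [Qp_proj]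
    _ = ∫ ω, ∫ η, f (mrg p ω η) * Qp μ p g ω ∂(Measure.pi μ) ∂(Measure.pi μ) :=
        integral_prod _ hKc
    _ = ∫ ω, Qp μ p f ω * Qp μ p g ω ∂(Measure.pi μ) := by
        refine integral_congr_ae (Filter.Eventually.of_forall fun ω => ?_)
        simp only
        exact integral_mul_const _ _

lemma condexp_Qp (hfm : Measurable f) (hf : Integrable f (Measure.pi μ)) :
    (Measure.pi μ)[f | MeasurableSpace.comap
        (fun (ω : ∀ i, Ω i) (i : Subtype p) => ω i.1) MeasurableSpace.pi]
      =ᵐ[Measure.pi μ] Qp μ p f := by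
  set ν := Measure.pi μ with hν
  set r := fun (ω : ∀ i, Ω i) (i : Subtype p) => ω i.1 with hr
  have hrm : Measurable r := measurable_pi_lambda _ fun i => measurable_pi_apply i.1
  have hm : MeasurableSpace.comap r MeasurableSpace.pi ≤ MeasurableSpace.pi := hrm.comap_le
  haveI : IsFiniteMeasure (ν.trim hm) := isFiniteMeasure_trim hm
  refine (ae_eq_condExp_of_forall_setIntegral_eq hm hf ?_ ?_ ?_).symm
  · exact fun s _ _ => (integrable_Qp μ hf).integrableOn
  · intro s hs _
    obtain ⟨t, ht, rfl⟩ := hs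
    have hsm : MeasurableSet (r ⁻¹' t) := hrm ht
    have hmem : ∀ (ω η : ∀ i, Ω i), mrg p ω η ∈ r ⁻¹' t ↔ ω ∈ r ⁻¹' t := by
      intro ω η
      have : r (mrg p ω η) = r ω := funext fun i => if_pos i.2
      simp only [Set.mem_preimage, this]
    have hind : Set.indicator (r ⁻¹' t) (Qp μ p f)
        = Qp μ p (Set.indicator (r ⁻¹' t) f) := by
      funext ω
      by_cases hω : ω ∈ r ⁻¹' t
      · rw [Set.indicator_of_mem hω]
        refine Eq.symm ?_
        unfold Qp
        refine integral_congr_ae (Filter.Eventually.of_forall fun η => ?_)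
        exact Set.indicator_of_mem ((hmem ω η).mpr hω) f
      · rw [Set.indicator_of_notMem hω]
        refine Eq.symm ?_
        have : (fun η => Set.indicator (r ⁻¹' t) f (mrg p ω η)) = fun _ => (0 : ℝ) :=
          funext fun η => Set.indicator_of_notMem (fun hc => hω ((hmem ω η).mp hc)) f
        unfold Qp
        rw [this, integral_zero]
    rw [← integral_indicator hsm, ← integral_indicator hsm, hind,
      integral_Qp μ (hf.indicator hsm)]
  · refine StronglyMeasurable.aestronglyMeasurable ?_
    set G : (∀ i : Subtype p, Ω i.1) → ℝ :=
      fun a => ∫ η, f (fun i => if h : p i then a ⟨i, h⟩ else η i) ∂ν with hG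
    have hGm : StronglyMeasurable G := by
      have hjm : Measurable (fun z : (∀ i : Subtype p, Ω i.1) × (∀ i, Ω i) =>
          f (fun i => if h : p i then z.1 ⟨i, h⟩ else z.2 i)) := by
        refine hfm.comp (measurable_pi_lambda _ fun i => ?_)
        by_cases h : p i
        · simp only [dif_pos h]; exact (measurable_pi_apply (⟨i, h⟩ : Subtype p)).comp
            measurable_fst
        · simp only [dif_neg h]; exact (measurable_pi_apply i).comp measurable_snd
      exact hjm.stronglyMeasurable.integral_prod_right'
    have hcomp : Qp μ p f = fun ω => G (r ω) := by
      funext ω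
      unfold Qp
      refine integral_congr_ae (Filter.Eventually.of_forall fun η => ?_)
      show f (mrg p ω η) = f (fun i => if h : p i then (r ω) ⟨i, h⟩ else η i)
      congr 1
    rw [hcomp]
    exact hGm.comp_measurable (Measurable.of_comap_le le_rfl)

lemma mp_eval (k : Fin n) :
    MeasurePreserving (fun ω : ∀ i, Ω i => ω k) (Measure.pi μ) (μ k) := by
  refine ⟨measurable_pi_apply k, ?_⟩
  refine Measure.ext fun s hs => ?_
  rw [Measure.map_apply (measurable_pi_apply k) hs]
  have hset : (fun ω : ∀ i, Ω i => ω k) ⁻¹' s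
      = Set.pi Set.univ (Function.update (fun i => (Set.univ : Set (Ω i))) k s) :=
    (Set.univ_pi_update_univ k s).symm
  rw [hset, Measure.pi_pi]
  rw [Finset.prod_eq_single_of_mem k (Finset.mem_univ k)
    (fun i _ hik => by simp [Function.update_of_ne hik])]
  simp

lemma Ek_eq_Qp (k : Fin n) (hfm : Measurable f) :
    Ek μ k f = Qp μ (fun j => j ≠ k) f := by
  funext ω
  have hasm : AEStronglyMeasurable (fun x => f (Function.update ω k x)) (μ k) :=
    (hfm.comp (measurable_update ω)).aestronglyMeasurable
  have h1 : ∫ η, f (Function.update ω k (η k)) ∂(Measure.pi μ)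
      = ∫ x, f (Function.update ω k x) ∂(μ k) :=
    integral_comp_mp (mp_eval μ k) hasm
  show ∫ x, f (Function.update ω k x) ∂(μ k) = _
  rw [← h1]
  unfold Qp
  refine integral_congr_ae (Filter.Eventually.of_forall fun η => ?_)
  show f (Function.update ω k (η k)) = f (mrg (fun j => j ≠ k) ω η)
  congr 1
  funext i
  rcases eq_or_ne i k with rfl | hik
  · simp [mrg, Function.update_self]
  · simp [mrg, hik, Function.update_of_ne hik]

lemma key_step {f g : (∀ i, Ω i) → ℝ} (hfm : Measurable f) (hgm : Measurable g)
    (hf2 : MemLp f 2 (Measure.pi μ)) (hg2 : MemLp g 2 (Measure.pi μ)) (k : Fin n)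
    {p' : Fin n → Prop} [DecidablePred p'] (hpp' : ∀ j, p j ∧ j ≠ k ↔ p' j) :
    ∫ ω, Dop μ k f ω * Qp μ p (Dop μ k g) ω ∂(Measure.pi μ)
      = (∫ ω, Qp μ p f ω * Qp μ p g ω ∂(Measure.pi μ))
        - ∫ ω, Qp μ p' f ω * Qp μ p' g ω ∂(Measure.pi μ) := by
  have hp'p : ∀ j, p' j → p j := fun j hj => ((hpp' j).mpr hj).1
  have hfInt : Integrable f (Measure.pi μ) := hf2.integrable one_le_two
  have hgInt : Integrable g (Measure.pi μ) := hg2.integrable one_le_two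
  have hsplit : ∀ (h : (∀ i, Ω i) → ℝ), Measurable h → MemLp h 2 (Measure.pi μ) →
      Qp μ p (Dop μ k h) =ᵐ[Measure.pi μ]
        fun ω => Qp μ p h ω - Qp μ p' h ω := by
    intro h hm h2
    have hInt : Integrable h (Measure.pi μ) := h2.integrable one_le_two
    have hEke : Ek μ k h = Qp μ (fun j => j ≠ k) h := Ek_eq_Qp μ k hm
    have hEkInt : Integrable (Ek μ k h) (Measure.pi μ) := by
      rw [hEke]; exact integrable_Qp μ hInt
    have e1 : Qp μ p (Dop μ k h) =ᵐ[Measure.pi μ]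
        fun ω => Qp μ p h ω - Qp μ p (Ek μ k h) ω :=
      Qp_sub (p := p) μ hInt hEkInt
    have e2 : Qp μ p (Ek μ k h) =ᵐ[Measure.pi μ] Qp μ p' h := by
      rw [hEke]
      have h3 := Qp_comp (p := p) (q := fun j => j ≠ k) μ hm hInt
      have h4 : Qp μ (fun i => p i ∧ i ≠ k) h = Qp μ p' h := Qp_congr μ hpp' h
      rw [h4] at h3; exact h3
    filter_upwards [e1, e2] with ω w1 w2
    rw [w1]
    simp only [w2]
  have hEkfm : Measurable (Ek μ k f) := by
    rw [Ek_eq_Qp μ k hfm]; exact (sm_Qp μ hfm).measurable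
  have hEkgm : Measurable (Ek μ k g) := by
    rw [Ek_eq_Qp μ k hgm]; exact (sm_Qp μ hgm).measurable
  have hDfm : Measurable (Dop μ k f) := hfm.sub hEkfm
  have hDgm : Measurable (Dop μ k g) := hgm.sub hEkgm
  have hDf2 : MemLp (Dop μ k f) 2 (Measure.pi μ) := by
    have h1 : MemLp (Ek μ k f) 2 (Measure.pi μ) := by
      rw [Ek_eq_Qp μ k hfm]; exact memL2_Qp μ hfm hf2
    exact hf2.sub h1
  have hDg2 : MemLp (Dop μ k g) 2 (Measure.pi μ) := by
    have h1 : MemLp (Ek μ k g) 2 (Measure.pi μ) := by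
      rw [Ek_eq_Qp μ k hgm]; exact memL2_Qp μ hgm hg2
    exact hg2.sub h1
  have hAm : Measurable (Qp μ p f) := (sm_Qp μ hfm).measurable
  have hA'm : Measurable (Qp μ p' f) := (sm_Qp μ hfm).measurable
  have hBm : Measurable (Qp μ p g) := (sm_Qp μ hgm).measurable
  have hB'm : Measurable (Qp μ p' g) := (sm_Qp μ hgm).measurable
  have hA2 : MemLp (Qp μ p f) 2 (Measure.pi μ) := memL2_Qp μ hfm hf2
  have hA'2 : MemLp (Qp μ p' f) 2 (Measure.pi μ) := memL2_Qp μ hfm hf2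
  have hB2 : MemLp (Qp μ p g) 2 (Measure.pi μ) := memL2_Qp μ hgm hg2
  have hB'2 : MemLp (Qp μ p' g) 2 (Measure.pi μ) := memL2_Qp μ hgm hg2
  have hAB : Integrable (fun ω => Qp μ p f ω * Qp μ p g ω) (Measure.pi μ) :=
    mul_int μ hA2 hB2
  have hAB' : Integrable (fun ω => Qp μ p f ω * Qp μ p' g ω) (Measure.pi μ) :=
    mul_int μ hA2 hB'2
  have hA'B : Integrable (fun ω => Qp μ p' f ω * Qp μ p g ω) (Measure.pi μ) :=
    mul_int μ hA'2 hB2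
  have hA'B' : Integrable (fun ω => Qp μ p' f ω * Qp μ p' g ω) (Measure.pi μ) :=
    mul_int μ hA'2 hB'2
  have cross1 : ∫ ω, Qp μ p f ω * Qp μ p' g ω ∂(Measure.pi μ)
      = ∫ ω, Qp μ p' f ω * Qp μ p' g ω ∂(Measure.pi μ) := by
    have hadj := Qp_adj (p := p') μ hAm hgm hA2 hg2
    rw [hadj]
    refine integral_congr_ae ?_
    have hc := Qp_comp (p := p') (q := p) μ hfm hfInt
    have hcongr : Qp μ (fun j => p' j ∧ p j) f = Qp μ p' f :=
      Qp_congr μ (fun j => ⟨fun hh => hh.1, fun hh => ⟨hh, hp'p j hh⟩⟩) f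
    filter_upwards [hc] with ω w
    rw [w, hcongr]
  have cross2 : ∫ ω, Qp μ p' f ω * Qp μ p g ω ∂(Measure.pi μ)
      = ∫ ω, Qp μ p' f ω * Qp μ p' g ω ∂(Measure.pi μ) := by
    have hcomm : ∫ ω, Qp μ p' f ω * Qp μ p g ω ∂(Measure.pi μ)
        = ∫ ω, Qp μ p g ω * Qp μ p' f ω ∂(Measure.pi μ) :=
      integral_congr_ae (Filter.Eventually.of_forall fun ω => mul_comm _ _)
    rw [hcomm]
    have hadj := Qp_adj (p := p') μ hBm hfm hB2 hf2
    rw [hadj]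
    have hc := Qp_comp (p := p') (q := p) μ hgm hgInt
    have hcongr : Qp μ (fun j => p' j ∧ p j) g = Qp μ p' g :=
      Qp_congr μ (fun j => ⟨fun hh => hh.1, fun hh => ⟨hh, hp'p j hh⟩⟩) g
    have : ∫ ω, Qp μ p' (Qp μ p g) ω * Qp μ p' f ω ∂(Measure.pi μ)
        = ∫ ω, Qp μ p' g ω * Qp μ p' f ω ∂(Measure.pi μ) := by
      refine integral_congr_ae ?_
      filter_upwards [hc] with ω w
      rw [w, hcongr]
    rw [this]
    exact integral_congr_ae (Filter.Eventually.of_forall fun ω => mul_comm _ _)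
  calc ∫ ω, Dop μ k f ω * Qp μ p (Dop μ k g) ω ∂(Measure.pi μ)
      = ∫ ω, Qp μ p (Dop μ k f) ω * Qp μ p (Dop μ k g) ω ∂(Measure.pi μ) :=
        Qp_adj (p := p) μ hDfm hDgm hDf2 hDg2
    _ = ∫ ω, (Qp μ p f ω - Qp μ p' f ω) * (Qp μ p g ω - Qp μ p' g ω) ∂(Measure.pi μ) := by
        refine integral_congr_ae ?_
        filter_upwards [hsplit f hfm hf2, hsplit g hgm hg2] with ω w1 w2
        rw [w1, w2]
    _ = ∫ ω, (Qp μ p f ω * Qp μ p g ω - Qp μ p f ω * Qp μ p' g ω)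
          - (Qp μ p' f ω * Qp μ p g ω - Qp μ p' f ω * Qp μ p' g ω) ∂(Measure.pi μ) :=
        integral_congr_ae (Filter.Eventually.of_forall fun ω => by ring)
    _ = ((∫ ω, Qp μ p f ω * Qp μ p g ω ∂(Measure.pi μ))
            - ∫ ω, Qp μ p f ω * Qp μ p' g ω ∂(Measure.pi μ))
          - ((∫ ω, Qp μ p' f ω * Qp μ p g ω ∂(Measure.pi μ))
            - ∫ ω, Qp μ p' f ω * Qp μ p' g ω ∂(Measure.pi μ)) := by
        have e0 : ∫ ω, (Qp μ p f ω * Qp μ p g ω - Qp μ p f ω * Qp μ p' g ω)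
              - (Qp μ p' f ω * Qp μ p g ω - Qp μ p' f ω * Qp μ p' g ω) ∂(Measure.pi μ)
            = (∫ ω, (Qp μ p f ω * Qp μ p g ω - Qp μ p f ω * Qp μ p' g ω) ∂(Measure.pi μ))
              - ∫ ω, (Qp μ p' f ω * Qp μ p g ω - Qp μ p' f ω * Qp μ p' g ω)
                ∂(Measure.pi μ) :=
          integral_sub (hAB.sub hAB') (hA'B.sub hA'B')
        have e1 : ∫ ω, (Qp μ p f ω * Qp μ p g ω - Qp μ p f ω * Qp μ p' g ω) ∂(Measure.pi μ)
            = (∫ ω, Qp μ p f ω * Qp μ p g ω ∂(Measure.pi μ))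
              - ∫ ω, Qp μ p f ω * Qp μ p' g ω ∂(Measure.pi μ) := integral_sub hAB hAB'
        have e2 : ∫ ω, (Qp μ p' f ω * Qp μ p g ω - Qp μ p' f ω * Qp μ p' g ω) ∂(Measure.pi μ)
            = (∫ ω, Qp μ p' f ω * Qp μ p g ω ∂(Measure.pi μ))
              - ∫ ω, Qp μ p' f ω * Qp μ p' g ω ∂(Measure.pi μ) := integral_sub hA'B hA'B'
        rw [e0, e1, e2]
    _ = (∫ ω, Qp μ p f ω * Qp μ p g ω ∂(Measure.pi μ))
          - ∫ ω, Qp μ p' f ω * Qp μ p' g ω ∂(Measure.pi μ) := by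
        rw [cross1, cross2]; ring

end CovHelpers

/-- Covariance identity: `Cov(U,V) = E[Σ_i 𝔇_i U · 𝔇_i^(α) V]`. -/
theorem covariance_identity {n : ℕ} {Ω : Fin n → Type*} [∀ i, MeasurableSpace (Ω i)]
    (μ : ∀ i, Measure (Ω i)) [∀ i, IsProbabilityMeasure (μ i)]
    (U V : (∀ i, Ω i) → ℝ) (hU : Measurable U) (hV : Measurable V)
    (hU2 : MemLp U 2 (Measure.pi μ)) (hV2 : MemLp V 2 (Measure.pi μ))
    (α : ℝ) (hα0 : 0 ≤ α) (hα1 : α ≤ 1) :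
    (∫ ω, U ω * V ω ∂(Measure.pi μ))
        - (∫ ω, U ω ∂(Measure.pi μ)) * (∫ ω, V ω ∂(Measure.pi μ))
      = ∫ ω, ∑ i, Dop μ i U ω * Dalpha μ α i V ω ∂(Measure.pi μ) := by
  -- abbreviations
  have hUint : Integrable U (Measure.pi μ) := hU2.integrable one_le_two
  have hVint : Integrable V (Measure.pi μ) := hV2.integrable one_le_two
  -- measurability and L² facts for the D operators
  have hEkm : ∀ (k : Fin n) (f : (∀ i, Ω i) → ℝ), Measurable f → Measurable (Ek μ k f) := by
    intro k f hf
    rw [Ek_eq_Qp μ k hf]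
    exact (sm_Qp μ hf).measurable
  have hDm : ∀ (k : Fin n) (f : (∀ i, Ω i) → ℝ), Measurable f → Measurable (Dop μ k f) :=
    fun k f hf => hf.sub (hEkm k f hf)
  have hD2 : ∀ (k : Fin n) (f : (∀ i, Ω i) → ℝ), Measurable f →
      MemLp f 2 (Measure.pi μ) → MemLp (Dop μ k f) 2 (Measure.pi μ) := by
    intro k f hf hf2
    have h1 : MemLp (Ek μ k f) 2 (Measure.pi μ) := by
      rw [Ek_eq_Qp μ k hf]; exact memL2_Qp μ hf hf2
    exact hf2.sub h1
  -- the F-side telescoping sum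
  have hle : ∀ k : Fin n, ∀ i : Fin n, (i ≤ k) ↔ ((i : ℕ) < (k : ℕ) + 1) := by
    intro k i; rw [Fin.le_def, Nat.lt_succ_iff]
  have hlt : ∀ k : Fin n, ∀ i : Fin n, (i < k) ↔ ((i : ℕ) < (k : ℕ)) := by
    intro k i; rw [Fin.lt_def]
  have hge : ∀ k : Fin n, ∀ i : Fin n, (k ≤ i) ↔ ((k : ℕ) ≤ (i : ℕ)) := by
    intro k i; rw [Fin.le_def]
  have hgt : ∀ k : Fin n, ∀ i : Fin n, (k < i) ↔ ((k : ℕ) + 1 ≤ (i : ℕ)) := by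
    intro k i; rw [Fin.lt_def, Nat.lt_iff_add_one_le]
  have FSum : ∑ k : Fin n, (∫ ω, Dop μ k U ω *
        Qp μ (fun j => j ≤ k) (Dop μ k V) ω ∂(Measure.pi μ))
      = (∫ ω, U ω * V ω ∂(Measure.pi μ))
        - (∫ ω, U ω ∂(Measure.pi μ)) * (∫ ω, V ω ∂(Measure.pi μ)) := by
    have hterm : ∀ k : Fin n, (∫ ω, Dop μ k U ω *
          Qp μ (fun j => j ≤ k) (Dop μ k V) ω ∂(Measure.pi μ))
        = (fun m : ℕ => ∫ ω, Qp μ (fun i => (i : ℕ) < m) U ω *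
            Qp μ (fun i => (i : ℕ) < m) V ω ∂(Measure.pi μ)) ((k : ℕ) + 1)
          - (fun m : ℕ => ∫ ω, Qp μ (fun i => (i : ℕ) < m) U ω *
            Qp μ (fun i => (i : ℕ) < m) V ω ∂(Measure.pi μ)) (k : ℕ) := by
      intro k
      have h1 := key_step (p := fun j => j ≤ k) (p' := fun j => j < k) μ hU hV hU2 hV2 k
        (fun j => ⟨fun hh => lt_of_le_of_ne hh.1 hh.2, fun h => ⟨le_of_lt h, ne_of_lt h⟩⟩)
      simp only
      rw [h1, Qp_congr μ (hle k) U, Qp_congr μ (hle k) V,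
        Qp_congr μ (hlt k) U, Qp_congr μ (hlt k) V]
    calc ∑ k : Fin n, (∫ ω, Dop μ k U ω *
          Qp μ (fun j => j ≤ k) (Dop μ k V) ω ∂(Measure.pi μ))
        = ∑ k : Fin n, ((fun m : ℕ => ∫ ω, Qp μ (fun i => (i : ℕ) < m) U ω *
              Qp μ (fun i => (i : ℕ) < m) V ω ∂(Measure.pi μ)) ((k : ℕ) + 1)
            - (fun m : ℕ => ∫ ω, Qp μ (fun i => (i : ℕ) < m) U ω *
              Qp μ (fun i => (i : ℕ) < m) V ω ∂(Measure.pi μ)) (k : ℕ)) :=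
          Finset.sum_congr rfl fun k _ => hterm k
      _ = ∑ m ∈ Finset.range n, ((fun m : ℕ => ∫ ω, Qp μ (fun i => (i : ℕ) < m) U ω *
              Qp μ (fun i => (i : ℕ) < m) V ω ∂(Measure.pi μ)) (m + 1)
            - (fun m : ℕ => ∫ ω, Qp μ (fun i => (i : ℕ) < m) U ω *
              Qp μ (fun i => (i : ℕ) < m) V ω ∂(Measure.pi μ)) m) :=
          Fin.sum_univ_eq_sum_range (fun m : ℕ => (fun m : ℕ => ∫ ω, Qp μ (fun i => (i : ℕ) < m) U ω *
              Qp μ (fun i => (i : ℕ) < m) V ω ∂(Measure.pi μ)) (m+1) - (fun m : ℕ => ∫ ω, Qp μ (fun i => (i : ℕ) < m) U ω *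
              Qp μ (fun i => (i : ℕ) < m) V ω ∂(Measure.pi μ)) m) n
      _ = (fun m : ℕ => ∫ ω, Qp μ (fun i => (i : ℕ) < m) U ω *
              Qp μ (fun i => (i : ℕ) < m) V ω ∂(Measure.pi μ)) n
            - (fun m : ℕ => ∫ ω, Qp μ (fun i => (i : ℕ) < m) U ω *
              Qp μ (fun i => (i : ℕ) < m) V ω ∂(Measure.pi μ)) 0 :=
          Finset.sum_range_sub (fun m : ℕ => ∫ ω, Qp μ (fun i => (i : ℕ) < m) U ω *
              Qp μ (fun i => (i : ℕ) < m) V ω ∂(Measure.pi μ)) n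
      _ = (∫ ω, U ω * V ω ∂(Measure.pi μ))
            - (∫ ω, U ω ∂(Measure.pi μ)) * (∫ ω, V ω ∂(Measure.pi μ)) := by
          simp only
          rw [Qp_top μ (fun i => i.isLt), Qp_top μ (fun i => i.isLt),
            Qp_bot μ (fun i => Nat.not_lt_zero _), Qp_bot μ (fun i => Nat.not_lt_zero _)]
          simp
  have GSum : ∑ k : Fin n, (∫ ω, Dop μ k U ω *
        Qp μ (fun j => k ≤ j) (Dop μ k V) ω ∂(Measure.pi μ))
      = (∫ ω, U ω * V ω ∂(Measure.pi μ))
        - (∫ ω, U ω ∂(Measure.pi μ)) * (∫ ω, V ω ∂(Measure.pi μ)) := by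
    have hterm : ∀ k : Fin n, (∫ ω, Dop μ k U ω *
          Qp μ (fun j => k ≤ j) (Dop μ k V) ω ∂(Measure.pi μ))
        = (fun m : ℕ => ∫ ω, Qp μ (fun i => m ≤ (i : ℕ)) U ω *
            Qp μ (fun i => m ≤ (i : ℕ)) V ω ∂(Measure.pi μ)) (k : ℕ)
          - (fun m : ℕ => ∫ ω, Qp μ (fun i => m ≤ (i : ℕ)) U ω *
            Qp μ (fun i => m ≤ (i : ℕ)) V ω ∂(Measure.pi μ)) ((k : ℕ) + 1) := by
      intro k
      have h1 := key_step (p := fun j => k ≤ j) (p' := fun j => k < j) μ hU hV hU2 hV2 k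
        (fun j => ⟨fun hh => lt_of_le_of_ne hh.1 (Ne.symm hh.2),
          fun h => ⟨le_of_lt h, (ne_of_lt h).symm⟩⟩)
      simp only
      rw [h1, Qp_congr μ (hge k) U, Qp_congr μ (hge k) V,
        Qp_congr μ (hgt k) U, Qp_congr μ (hgt k) V]
    calc ∑ k : Fin n, (∫ ω, Dop μ k U ω *
          Qp μ (fun j => k ≤ j) (Dop μ k V) ω ∂(Measure.pi μ))
        = ∑ k : Fin n, ((fun m : ℕ => ∫ ω, Qp μ (fun i => m ≤ (i : ℕ)) U ω *
              Qp μ (fun i => m ≤ (i : ℕ)) V ω ∂(Measure.pi μ)) (k : ℕ)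
            - (fun m : ℕ => ∫ ω, Qp μ (fun i => m ≤ (i : ℕ)) U ω *
              Qp μ (fun i => m ≤ (i : ℕ)) V ω ∂(Measure.pi μ)) ((k : ℕ) + 1)) :=
          Finset.sum_congr rfl fun k _ => hterm k
      _ = ∑ m ∈ Finset.range n, ((fun m : ℕ => ∫ ω, Qp μ (fun i => m ≤ (i : ℕ)) U ω *
              Qp μ (fun i => m ≤ (i : ℕ)) V ω ∂(Measure.pi μ)) m
            - (fun m : ℕ => ∫ ω, Qp μ (fun i => m ≤ (i : ℕ)) U ω *
              Qp μ (fun i => m ≤ (i : ℕ)) V ω ∂(Measure.pi μ)) (m + 1)) :=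
          Fin.sum_univ_eq_sum_range (fun m : ℕ => (fun m : ℕ => ∫ ω, Qp μ (fun i => m ≤ (i : ℕ)) U ω *
              Qp μ (fun i => m ≤ (i : ℕ)) V ω ∂(Measure.pi μ)) m - (fun m : ℕ => ∫ ω, Qp μ (fun i => m ≤ (i : ℕ)) U ω *
              Qp μ (fun i => m ≤ (i : ℕ)) V ω ∂(Measure.pi μ)) (m+1)) n
      _ = (fun m : ℕ => ∫ ω, Qp μ (fun i => m ≤ (i : ℕ)) U ω *
              Qp μ (fun i => m ≤ (i : ℕ)) V ω ∂(Measure.pi μ)) 0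
            - (fun m : ℕ => ∫ ω, Qp μ (fun i => m ≤ (i : ℕ)) U ω *
              Qp μ (fun i => m ≤ (i : ℕ)) V ω ∂(Measure.pi μ)) n :=
          Finset.sum_range_sub' (fun m : ℕ => ∫ ω, Qp μ (fun i => m ≤ (i : ℕ)) U ω *
              Qp μ (fun i => m ≤ (i : ℕ)) V ω ∂(Measure.pi μ)) n
      _ = (∫ ω, U ω * V ω ∂(Measure.pi μ))
            - (∫ ω, U ω ∂(Measure.pi μ)) * (∫ ω, V ω ∂(Measure.pi μ)) := by
          simp only
          rw [Qp_top μ (fun i => Nat.zero_le _), Qp_top μ (fun i => Nat.zero_le _),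
            Qp_bot μ (fun i => Nat.not_le.mpr i.isLt), Qp_bot μ (fun i => Nat.not_le.mpr i.isLt)]
          simp
  -- identify the conditional expectations
  have condF : ∀ k : Fin n, (Measure.pi μ)[Dop μ k V | Fsig Ω k]
      =ᵐ[Measure.pi μ] Qp μ (fun j => j ≤ k) (Dop μ k V) := by
    intro k
    exact condexp_Qp (p := fun j => j ≤ k) μ (hDm k V hV)
      ((hD2 k V hV hV2).integrable one_le_two)
  have condG : ∀ k : Fin n, (Measure.pi μ)[Dop μ k V | Gsig Ω k]
      =ᵐ[Measure.pi μ] Qp μ (fun j => k ≤ j) (Dop μ k V) := by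
    intro k
    exact condexp_Qp (p := fun j => k ≤ j) μ (hDm k V hV)
      ((hD2 k V hV hV2).integrable one_le_two)
  have hcondF2 : ∀ k : Fin n, MemLp ((Measure.pi μ)[Dop μ k V | Fsig Ω k]) 2 (Measure.pi μ) :=
    fun k => MemLp.ae_eq (condF k).symm (memL2_Qp μ (hDm k V hV) (hD2 k V hV hV2))
  have hcondG2 : ∀ k : Fin n, MemLp ((Measure.pi μ)[Dop μ k V | Gsig Ω k]) 2 (Measure.pi μ) :=
    fun k => MemLp.ae_eq (condG k).symm (memL2_Qp μ (hDm k V hV) (hD2 k V hV hV2))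
  have hDalpha2 : ∀ k : Fin n, MemLp (Dalpha μ α k V) 2 (Measure.pi μ) := by
    intro k
    exact MemLp.add ((hcondF2 k).const_mul α) ((hcondG2 k).const_mul (1 - α))
  have hint : ∀ k : Fin n,
      Integrable (fun ω => Dop μ k U ω * Dalpha μ α k V ω) (Measure.pi μ) :=
    fun k => mul_int μ (hD2 k U hU hU2) (hDalpha2 k)
  -- per-index decomposition of the right-hand side
  have hper : ∀ k : Fin n, ∫ ω, Dop μ k U ω * Dalpha μ α k V ω ∂(Measure.pi μ)
      = α * (∫ ω, Dop μ k U ω * Qp μ (fun j => j ≤ k) (Dop μ k V) ω ∂(Measure.pi μ))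
        + (1 - α) * (∫ ω, Dop μ k U ω *
            Qp μ (fun j => k ≤ j) (Dop μ k V) ω ∂(Measure.pi μ)) := by
    intro k
    have hiF : Integrable (fun ω => Dop μ k U ω *
        ((Measure.pi μ)[Dop μ k V | Fsig Ω k]) ω) (Measure.pi μ) :=
      mul_int μ (hD2 k U hU hU2) (hcondF2 k)
    have hiG : Integrable (fun ω => Dop μ k U ω *
        ((Measure.pi μ)[Dop μ k V | Gsig Ω k]) ω) (Measure.pi μ) :=
      mul_int μ (hD2 k U hU hU2) (hcondG2 k)
    calc ∫ ω, Dop μ k U ω * Dalpha μ α k V ω ∂(Measure.pi μ)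
        = ∫ ω, (α * (Dop μ k U ω * ((Measure.pi μ)[Dop μ k V | Fsig Ω k]) ω)
            + (1 - α) * (Dop μ k U ω * ((Measure.pi μ)[Dop μ k V | Gsig Ω k]) ω))
              ∂(Measure.pi μ) := by
          refine integral_congr_ae (Filter.Eventually.of_forall fun ω => ?_)
          simp only [Dalpha]
          ring
      _ = α * (∫ ω, Dop μ k U ω * ((Measure.pi μ)[Dop μ k V | Fsig Ω k]) ω ∂(Measure.pi μ))
          + (1 - α) * (∫ ω, Dop μ k U ω *
              ((Measure.pi μ)[Dop μ k V | Gsig Ω k]) ω ∂(Measure.pi μ)) := by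
          rw [integral_add (hiF.const_mul α) (hiG.const_mul (1 - α)),
            integral_const_mul, integral_const_mul]
      _ = α * (∫ ω, Dop μ k U ω * Qp μ (fun j => j ≤ k) (Dop μ k V) ω ∂(Measure.pi μ))
          + (1 - α) * (∫ ω, Dop μ k U ω *
              Qp μ (fun j => k ≤ j) (Dop μ k V) ω ∂(Measure.pi μ)) := by
          congr 1
          · congr 1
            refine integral_congr_ae ?_
            filter_upwards [condF k] with ω w
            rw [w]
          · congr 1
            refine integral_congr_ae ?_
            filter_upwards [condG k] with ω w
            rw [w]
  -- assemble
  rw [integral_finset_sum Finset.univ (fun k _ => hint k)]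
  rw [Finset.sum_congr rfl fun k _ => hper k]
  rw [Finset.sum_add_distrib, ← Finset.mul_sum, ← Finset.mul_sum, FSum, GSum]
  ring
end

section
/- For the function h(x) = |x|^(1+δ) with δ ∈ (0,1], its derivative h'(x) = (1+δ)|x|^δ sign(x) satisfies |h'(x) − h'(y)| ≤ 2^(1−δ)(1+δ)|x−y|^δ for all real x, y. -/
/-!
Up to the factor `1 + δ`, the derivative is the odd power `g(x) = |x|^δ sign x`, which is
monotone. For `y ≤ x` of the same sign, oddness and the subadditivity of `t ↦ t^δ` give
`g x - g y ≤ (x - y)^δ`; for `y < 0 < x`, `g x - g y = x^δ + (-y)^δ`, and concavity of `t ↦ t^δ`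
at the midpoint of `x` and `-y` bounds this by `2^(1-δ) (x - y)^δ`.
-/

open Real

theorem Real.add_rpow_le_mul_rpow_add {p a b : ℝ} (ha : 0 ≤ a) (hb : 0 ≤ b) (hp₀ : 0 ≤ p)
    (hp₁ : p ≤ 1) : a ^ p + b ^ p ≤ 2 ^ (1 - p) * (a + b) ^ p := by
  have hmid := (concaveOn_rpow hp₀ hp₁).2 ha hb (by norm_num : (0 : ℝ) ≤ 1 / 2)
    (by norm_num : (0 : ℝ) ≤ 1 / 2) (add_halves 1)
  have hscale : 2 ^ (1 - p) * (a + b) ^ p = 2 * ((1 / 2 : ℝ) • a + (1 / 2 : ℝ) • b) ^ p := by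
    rw [← smul_add, smul_eq_mul, mul_rpow (by norm_num) (by positivity), rpow_sub two_pos,
      rpow_one, div_rpow zero_le_one zero_le_two, one_rpow]
    field_simp
  simp only [smul_eq_mul] at hmid hscale
  linarith

theorem Real.rpow_sub_rpow_le_rpow_sub {p x y : ℝ} (hy : 0 ≤ y) (hyx : y ≤ x) (hp₀ : 0 ≤ p)
    (hp₁ : p ≤ 1) : x ^ p - y ^ p ≤ (x - y) ^ p := by
  have := rpow_add_le_add_rpow (sub_nonneg.2 hyx) hy hp₀ hp₁
  rw [sub_add_cancel] at this
  linarith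

noncomputable def oddRpow (p x : ℝ) : ℝ := |x| ^ p * Real.sign x

section OddRpow

variable {p x y : ℝ}

theorem oddRpow_neg : oddRpow p (-x) = -oddRpow p x := by
  simp only [oddRpow, abs_neg, Real.sign_neg, mul_neg]

theorem oddRpow_of_nonneg (hp : p ≠ 0) (hx : 0 ≤ x) : oddRpow p x = x ^ p := by
  rcases hx.eq_or_lt with rfl | hx
  · simp [oddRpow, zero_rpow hp]
  · rw [oddRpow, Real.sign_of_pos hx, abs_of_pos hx, mul_one]

theorem oddRpow_of_nonpos (hp : p ≠ 0) (hx : x ≤ 0) : oddRpow p x = -(-x) ^ p := by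
  rw [← neg_neg x, oddRpow_neg, oddRpow_of_nonneg hp (neg_nonneg.2 hx), neg_neg]

theorem monotone_oddRpow (hp : 0 < p) : Monotone (oddRpow p) := by
  have nonneg_case {x y : ℝ} (hy : 0 ≤ y) (hyx : y ≤ x) : oddRpow p y ≤ oddRpow p x := by
    rw [oddRpow_of_nonneg hp.ne' hy, oddRpow_of_nonneg hp.ne' (hy.trans hyx)]
    exact rpow_le_rpow hy hyx hp.le
  intro y x hyx
  rcases le_total 0 y with hy | hy
  · exact nonneg_case hy hyx
  rcases le_total x 0 with hx | hx
  · simpa only [oddRpow_neg, neg_le_neg_iff] using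
      nonneg_case (neg_nonneg.2 hx) (neg_le_neg hyx)
  · rw [oddRpow_of_nonpos hp.ne' hy, oddRpow_of_nonneg hp.ne' hx]
    exact (neg_nonpos.2 (rpow_nonneg (neg_nonneg.2 hy) p)).trans (rpow_nonneg hx p)

theorem oddRpow_sub_le (hp₀ : 0 < p) (hp₁ : p ≤ 1) (hyx : y ≤ x) :
    oddRpow p x - oddRpow p y ≤ 2 ^ (1 - p) * (x - y) ^ p := by
  have hone : (1 : ℝ) ≤ 2 ^ (1 - p) := one_le_rpow one_le_two (by linarith)
  have nonneg_case {x y : ℝ} (hy : 0 ≤ y) (hyx : y ≤ x) :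
      oddRpow p x - oddRpow p y ≤ 2 ^ (1 - p) * (x - y) ^ p := by
    rw [oddRpow_of_nonneg hp₀.ne' hy, oddRpow_of_nonneg hp₀.ne' (hy.trans hyx)]
    calc x ^ p - y ^ p ≤ (x - y) ^ p := rpow_sub_rpow_le_rpow_sub hy hyx hp₀.le hp₁
      _ ≤ 2 ^ (1 - p) * (x - y) ^ p :=
        le_mul_of_one_le_left (rpow_nonneg (sub_nonneg.2 hyx) p) hone
  rcases le_total 0 y with hy | hy
  · exact nonneg_case hy hyx
  rcases le_total x 0 with hx | hx
  · have := nonneg_case (neg_nonneg.2 hx) (neg_le_neg hyx)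
    rwa [oddRpow_neg, oddRpow_neg, neg_sub_neg, neg_sub_neg] at this
  · rw [oddRpow_of_nonneg hp₀.ne' hx, oddRpow_of_nonpos hp₀.ne' hy, sub_neg_eq_add,
      sub_eq_add_neg]
    exact add_rpow_le_mul_rpow_add hx (neg_nonneg.2 hy) hp₀.le hp₁

theorem abs_oddRpow_sub_le (hp₀ : 0 < p) (hp₁ : p ≤ 1) :
    |oddRpow p x - oddRpow p y| ≤ 2 ^ (1 - p) * |x - y| ^ p := by
  wlog hyx : y ≤ x generalizing x y
  · rw [abs_sub_comm, abs_sub_comm x]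
    exact this (le_of_not_ge hyx)
  rw [abs_of_nonneg (sub_nonneg.2 hyx), abs_of_nonneg (sub_nonneg.2 (monotone_oddRpow hp₀ hyx))]
  exact oddRpow_sub_le hp₀ hp₁ hyx

end OddRpow

theorem holder_deriv_abs_rpow (δ : ℝ) (hδ0 : 0 < δ) (hδ1 : δ ≤ 1) (x y : ℝ) :
    |(1 + δ) * |x| ^ δ * Real.sign x - (1 + δ) * |y| ^ δ * Real.sign y|
      ≤ 2 ^ (1 - δ) * (1 + δ) * |x - y| ^ δ := by
  have hfactor : (1 + δ) * |x| ^ δ * Real.sign x - (1 + δ) * |y| ^ δ * Real.sign y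
      = (1 + δ) * (oddRpow δ x - oddRpow δ y) := by
    simp only [oddRpow]
    ring
  rw [hfactor, abs_mul, abs_of_pos (by linarith), mul_comm (2 ^ (1 - δ)), mul_assoc]
  exact mul_le_mul_of_nonneg_left (abs_oddRpow_sub_le hδ0 hδ1) (by linarith)
end

section
/- Let X = (X₁,...,Xₙ) be independent random variables and U = U(X) ∈ L²(P). Then E|U|² ≤ |E U|² + Σ_{k=1}^n E|𝔇_k U|², i.e. Var(U) ≤ Σ_{k=1}^n E|U − E_k U|² (Efron–Stein inequality). -/
open MeasureTheory Real

section Aux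

lemma sq_integral_le' {α : Type*} [MeasurableSpace α] {ν : Measure α} [IsProbabilityMeasure ν]
    {g : α → ℝ} (hg : MemLp g 2 ν) : (∫ x, g x ∂ν) ^ 2 ≤ ∫ x, g x ^ 2 ∂ν := by
  have h := ProbabilityTheory.variance_nonneg g ν
  rw [ProbabilityTheory.variance_eq_sub hg] at h
  simp only [Pi.pow_apply] at h
  linarith

lemma integrable_mul_of_memℒp_two {α : Type*} [MeasurableSpace α] {ν : Measure α}
    {g h : α → ℝ} (hg : MemLp g 2 ν) (hh : MemLp h 2 ν) :
    Integrable (fun x => g x * h x) ν := by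
  have h1 : Integrable (fun x => (g x + h x) ^ 2) ν := (hg.add hh).integrable_sq
  have h2 := hg.integrable_sq
  have h3 := hh.integrable_sq
  have heq : (fun x => g x * h x) = fun x => ((g x + h x) ^ 2 - g x ^ 2 - h x ^ 2) / 2 :=
    funext fun x => by ring
  rw [heq]
  exact ((h1.sub h2).sub h3).div_const 2

variable {n : ℕ} {Ω : Fin n → Type*} [∀ i, MeasurableSpace (Ω i)]
  (μ : ∀ i, Measure (Ω i)) [∀ i, IsProbabilityMeasure (μ i)]

lemma mp_update (k : Fin n) :
    MeasurePreserving (fun p : (∀ i, Ω i) × Ω k => Function.update p.1 k p.2)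
      ((Measure.pi μ).prod (μ k)) (Measure.pi μ) := by
  refine ⟨measurable_update', ?_⟩
  refine (Measure.pi_eq fun s hs => ?_).symm
  rw [Measure.map_apply measurable_update' (MeasurableSet.univ_pi hs)]
  have hpre : (fun p : (∀ i, Ω i) × Ω k => Function.update p.1 k p.2) ⁻¹'
        (Set.pi Set.univ s)
      = (Set.pi Set.univ (fun i => if i = k then Set.univ else s i)) ×ˢ (s k) := by
    ext p
    simp only [Set.mem_preimage, Set.mem_pi, Set.mem_univ, true_implies, Set.mem_prod]
    constructor
    · intro h
      refine ⟨fun i => ?_, by simpa using h k⟩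
      by_cases hik : i = k
      · simp [hik]
      · simpa [hik, Function.update_of_ne hik] using h i
    · rintro ⟨h1, h2⟩ i
      by_cases hik : i = k
      · subst hik; simpa using h2
      · have := h1 i
        rw [if_neg hik] at this
        rwa [Function.update_of_ne hik]
  rw [hpre, Measure.prod_prod, Measure.pi_pi]
  have h1 : (∏ i, (μ i) (if i = k then Set.univ else s i))
      = ∏ i ∈ Finset.univ.erase k, μ i (s i) := by
    rw [← Finset.prod_erase_mul _ _ (Finset.mem_univ k), if_pos rfl, measure_univ, mul_one]
    exact Finset.prod_congr rfl fun i hi => by rw [if_neg (Finset.ne_of_mem_erase hi)]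
  rw [h1, Finset.prod_erase_mul _ _ (Finset.mem_univ k)]

variable {μ}
variable {f g : (∀ i, Ω i) → ℝ} {k j : Fin n}

lemma memℒp_comp_update (hf2 : MemLp f 2 (Measure.pi μ)) :
    MemLp (fun p : (∀ i, Ω i) × Ω k => f (Function.update p.1 k p.2)) 2
      ((Measure.pi μ).prod (μ k)) :=
  hf2.comp_measurePreserving (mp_update μ k)

lemma integrable_comp_update (hf : Integrable f (Measure.pi μ)) :
    Integrable (fun p : (∀ i, Ω i) × Ω k => f (Function.update p.1 k p.2))
      ((Measure.pi μ).prod (μ k)) :=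
  ((mp_update μ k).integrable_comp hf.1).mpr hf

lemma stronglyMeasurable_Ek (hf : Measurable f) : StronglyMeasurable (Ek μ k f) :=
  StronglyMeasurable.integral_prod_right'
    (f := fun p : (∀ i, Ω i) × Ω k => f (Function.update p.1 k p.2))
    (hf.comp measurable_update').stronglyMeasurable

lemma measurable_Ek (hf : Measurable f) : Measurable (Ek μ k f) :=
  (stronglyMeasurable_Ek hf).measurable

omit [∀ i, IsProbabilityMeasure (μ i)] in
lemma Ek_update (ω : ∀ i, Ω i) (x : Ω k) :
    Ek μ k f (Function.update ω k x) = Ek μ k f ω := by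
  simp only [Ek, Function.update_idem]

lemma integral_eq_prod (hf : AEStronglyMeasurable f (Measure.pi μ)) (k : Fin n) :
    ∫ ω, f ω ∂(Measure.pi μ)
      = ∫ p : (∀ i, Ω i) × Ω k, f (Function.update p.1 k p.2)
          ∂((Measure.pi μ).prod (μ k)) := by
  conv_lhs => rw [← (mp_update μ k).map_eq]
  exact integral_map measurable_update'.aemeasurable ((mp_update μ k).map_eq.symm ▸ hf)

lemma integral_Ek (hf : Integrable f (Measure.pi μ)) :
    ∫ ω, Ek μ k f ω ∂(Measure.pi μ) = ∫ ω, f ω ∂(Measure.pi μ) := by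
  rw [integral_eq_prod hf.1 k, integral_prod _ (integrable_comp_update hf)]
  rfl

lemma integrable_Ek (hf : Integrable f (Measure.pi μ)) :
    Integrable (Ek μ k f) (Measure.pi μ) :=
  (integrable_comp_update (k := k) hf).integral_prod_left

lemma memℒp_Ek (hf : Measurable f) (hf2 : MemLp f 2 (Measure.pi μ)) :
    MemLp (Ek μ k f) 2 (Measure.pi μ) := by
  have hsm := stronglyMeasurable_Ek (μ := μ) (k := k) hf
  rw [memLp_two_iff_integrable_sq hsm.aestronglyMeasurable]
  have hint : Integrable (Ek μ k (fun w => f w ^ 2)) (Measure.pi μ) :=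
    integrable_Ek hf2.integrable_sq
  refine hint.mono ((hsm.measurable.pow_const 2).aestronglyMeasurable) ?_
  filter_upwards [(integrable_comp_update (k := k) hf2.integrable_sq).prod_right_ae]
    with ω hω
  have hmg : Measurable fun x => f (Function.update ω k x) :=
    hf.comp (measurable_update ω)
  have hg : MemLp (fun x => f (Function.update ω k x)) 2 (μ k) :=
    (memLp_two_iff_integrable_sq hmg.aestronglyMeasurable).2 hω
  have h1 : ‖Ek μ k f ω ^ 2‖ = (∫ x, f (Function.update ω k x) ∂(μ k)) ^ 2 := by
    rw [Real.norm_eq_abs, abs_of_nonneg (sq_nonneg _)]; rfl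
  have h2 : Ek μ k (fun w => f w ^ 2) ω = ∫ x, f (Function.update ω k x) ^ 2 ∂(μ k) := rfl
  rw [h1]
  calc (∫ x, f (Function.update ω k x) ∂(μ k)) ^ 2
      ≤ ∫ x, f (Function.update ω k x) ^ 2 ∂(μ k) := sq_integral_le' hg
    _ ≤ ‖Ek μ k (fun w => f w ^ 2) ω‖ := by rw [h2]; exact le_abs_self _


lemma mp_fst : MeasurePreserving (Prod.fst : (∀ i, Ω i) × Ω k → (∀ i, Ω i))
    ((Measure.pi μ).prod (μ k)) (Measure.pi μ) :=
  ⟨measurable_fst, by simp [Measure.map_fst_prod]⟩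

lemma integral_mul_Ek (hf : Measurable f) (hf2 : MemLp f 2 (Measure.pi μ)) :
    ∫ ω, Ek μ k f ω * f ω ∂(Measure.pi μ)
      = ∫ ω, Ek μ k f ω ^ 2 ∂(Measure.pi μ) := by
  have hEk2 : MemLp (Ek μ k f) 2 (Measure.pi μ) := memℒp_Ek hf hf2
  have hfst : MemLp (fun p : (∀ i, Ω i) × Ω k => Ek μ k f p.1) 2
      ((Measure.pi μ).prod (μ k)) := hEk2.comp_measurePreserving mp_fst
  have hupd : MemLp (fun p : (∀ i, Ω i) × Ω k => f (Function.update p.1 k p.2)) 2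
      ((Measure.pi μ).prod (μ k)) := memℒp_comp_update hf2
  have hint : Integrable
      (fun p : (∀ i, Ω i) × Ω k => Ek μ k f p.1 * f (Function.update p.1 k p.2))
      ((Measure.pi μ).prod (μ k)) := integrable_mul_of_memℒp_two hfst hupd
  have hasm : AEStronglyMeasurable (fun ω => Ek μ k f ω * f ω) (Measure.pi μ) :=
    ((measurable_Ek hf).mul hf).aestronglyMeasurable
  calc ∫ ω, Ek μ k f ω * f ω ∂(Measure.pi μ)
      = ∫ p : (∀ i, Ω i) × Ω k,
          Ek μ k f (Function.update p.1 k p.2) * f (Function.update p.1 k p.2)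
          ∂((Measure.pi μ).prod (μ k)) := integral_eq_prod hasm k
    _ = ∫ p : (∀ i, Ω i) × Ω k, Ek μ k f p.1 * f (Function.update p.1 k p.2)
          ∂((Measure.pi μ).prod (μ k)) := by
        congr 1; funext p; rw [Ek_update]
    _ = ∫ ω, ∫ x, Ek μ k f ω * f (Function.update ω k x) ∂(μ k) ∂(Measure.pi μ) :=
        integral_prod _ hint
    _ = ∫ ω, Ek μ k f ω ^ 2 ∂(Measure.pi μ) := by
        congr 1; funext ω
        rw [integral_const_mul]
        change Ek μ k f ω * Ek μ k f ω = _
        ring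

lemma pythagoras (hf : Measurable f) (hf2 : MemLp f 2 (Measure.pi μ)) :
    ∫ ω, f ω ^ 2 ∂(Measure.pi μ)
      = ∫ ω, Ek μ k f ω ^ 2 ∂(Measure.pi μ) + ∫ ω, Dop μ k f ω ^ 2 ∂(Measure.pi μ) := by
  have hEk2 : MemLp (Ek μ k f) 2 (Measure.pi μ) := memℒp_Ek hf hf2
  have hd2 : MemLp (Dop μ k f) 2 (Measure.pi μ) := hf2.sub hEk2
  have h1 : Integrable (fun ω => Ek μ k f ω ^ 2) (Measure.pi μ) := hEk2.integrable_sq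
  have h2 : Integrable (fun ω => Dop μ k f ω ^ 2) (Measure.pi μ) := hd2.integrable_sq
  have h3 : Integrable (fun ω => Ek μ k f ω * f ω) (Measure.pi μ) :=
    integrable_mul_of_memℒp_two hEk2 hf2
  have key : (fun ω => f ω ^ 2)
      = fun ω => (Ek μ k f ω ^ 2 + Dop μ k f ω ^ 2)
          + 2 * (Ek μ k f ω * f ω - Ek μ k f ω ^ 2) := by
    funext ω; simp only [Dop]; ring
  have h4 : Integrable (fun ω => 2 * (Ek μ k f ω * f ω - Ek μ k f ω ^ 2)) (Measure.pi μ) :=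
    (h3.sub h1).const_mul 2
  have h12 : Integrable (fun ω => Ek μ k f ω ^ 2 + Dop μ k f ω ^ 2) (Measure.pi μ) := h1.add h2
  rw [key, integral_add h12 h4, integral_add h1 h2, integral_const_mul, integral_sub h3 h1,
    integral_mul_Ek hf hf2]
  ring

lemma integral_sq_Ek_le (hf : Measurable f) (hf2 : MemLp f 2 (Measure.pi μ)) :
    ∫ ω, Ek μ k f ω ^ 2 ∂(Measure.pi μ) ≤ ∫ ω, f ω ^ 2 ∂(Measure.pi μ) := by
  rw [pythagoras (k := k) hf hf2]
  have : 0 ≤ ∫ ω, Dop μ k f ω ^ 2 ∂(Measure.pi μ) :=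
    integral_nonneg fun ω => sq_nonneg _
  linarith

lemma Ek_sub (hf : Integrable f (Measure.pi μ)) (hg : Integrable g (Measure.pi μ)) :
    Ek μ j (fun ω => f ω - g ω)
      =ᵐ[Measure.pi μ] fun ω => Ek μ j f ω - Ek μ j g ω := by
  filter_upwards [(integrable_comp_update (k := j) hf).prod_right_ae,
    (integrable_comp_update (k := j) hg).prod_right_ae] with ω h1 h2
  simp only [Ek]
  rw [integral_sub h1 h2]

lemma Ek_comm (hjk : j ≠ k) (hf : Measurable f) (hf1 : Integrable f (Measure.pi μ)) :
    Ek μ j (Ek μ k f) =ᵐ[Measure.pi μ] Ek μ k (Ek μ j f) := by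
  have mpT : MeasurePreserving
      (fun q : ((∀ i, Ω i) × Ω j) × Ω k =>
        Function.update (Function.update q.1.1 j q.1.2) k q.2)
      (((Measure.pi μ).prod (μ j)).prod (μ k)) (Measure.pi μ) :=
    (mp_update μ k).comp ((mp_update μ j).prod (MeasurePreserving.id (μ k)))
  have hmeas3 : Measurable (fun q : (∀ i, Ω i) × Ω j × Ω k =>
      f (Function.update (Function.update q.1 j q.2.1) k q.2.2)) := by
    exact hf.comp (measurable_update'.comp
      ((measurable_update'.comp (measurable_fst.prodMk measurable_snd.fst)).prodMk
        measurable_snd.snd))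
  have hint3 : Integrable
      (fun q : ((∀ i, Ω i) × Ω j) × Ω k =>
        f (Function.update (Function.update q.1.1 j q.1.2) k q.2))
      (((Measure.pi μ).prod (μ j)).prod (μ k)) := (mpT.integrable_comp hf1.1).mpr hf1
  have hint2 : Integrable
      (fun q : (∀ i, Ω i) × Ω j × Ω k =>
        f (Function.update (Function.update q.1 j q.2.1) k q.2.2))
      ((Measure.pi μ).prod ((μ j).prod (μ k))) :=
    ((measurePreserving_prodAssoc (Measure.pi μ) (μ j) (μ k)).integrable_comp
      hmeas3.aestronglyMeasurable).mp hint3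
  filter_upwards [hint2.prod_right_ae] with ω hω
  have swap := integral_integral_swap
    (f := fun x y => f (Function.update (Function.update ω j x) k y)) hω
  show (∫ x, ∫ y, f (Function.update (Function.update ω j x) k y) ∂(μ k) ∂(μ j))
      = ∫ y, ∫ x, f (Function.update (Function.update ω k y) j x) ∂(μ j) ∂(μ k)
  rw [swap]
  simp only [Function.update_comm hjk]

lemma measurable_Dop (hf : Measurable f) : Measurable (Dop μ k f) :=
  hf.sub (measurable_Ek hf)

lemma memℒp_Dop (hf : Measurable f) (hf2 : MemLp f 2 (Measure.pi μ)) :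
    MemLp (Dop μ k f) 2 (Measure.pi μ) :=
  hf2.sub (memℒp_Ek hf hf2)

lemma dop_contract (hjk : j ≠ k) (hf : Measurable f) (hf2 : MemLp f 2 (Measure.pi μ)) :
    ∫ ω, Dop μ k (Ek μ j f) ω ^ 2 ∂(Measure.pi μ)
      ≤ ∫ ω, Dop μ k f ω ^ 2 ∂(Measure.pi μ) := by
  have hf1 : Integrable f (Measure.pi μ) := hf2.integrable one_le_two
  have hEkk : MemLp (Ek μ k f) 2 (Measure.pi μ) := memℒp_Ek hf hf2
  have hcomm := Ek_comm hjk hf hf1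
  have hsub := Ek_sub (j := j) hf1 (integrable_Ek (k := k) hf1)
  have hae : Dop μ k (Ek μ j f) =ᵐ[Measure.pi μ] Ek μ j (Dop μ k f) := by
    filter_upwards [hcomm, hsub] with ω h1 h2
    have : Ek μ j (Dop μ k f) ω = Ek μ j (fun w => f w - Ek μ k f w) ω := rfl
    show Ek μ j f ω - Ek μ k (Ek μ j f) ω = _
    rw [this, h2, ← h1]
  calc ∫ ω, Dop μ k (Ek μ j f) ω ^ 2 ∂(Measure.pi μ)
      = ∫ ω, Ek μ j (Dop μ k f) ω ^ 2 ∂(Measure.pi μ) :=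
        integral_congr_ae (hae.mono fun ω h => by simp only []; rw [h])
    _ ≤ ∫ ω, Dop μ k f ω ^ 2 ∂(Measure.pi μ) :=
        integral_sq_Ek_le (measurable_Dop hf) (memℒp_Dop hf hf2)

variable (μ) in
/-- Iterated coordinate-expectations: `Wseq μ U m` integrates out the first `m` coordinates. -/
noncomputable def Wseq (U : (∀ i, Ω i) → ℝ) : ℕ → ((∀ i, Ω i) → ℝ)
  | 0 => U
  | (m + 1) => if h : m < n then Ek μ ⟨m, h⟩ (Wseq U m) else Wseq U m

variable {U : (∀ i, Ω i) → ℝ}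

lemma Wseq_meas (hU : Measurable U) : ∀ m, Measurable (Wseq μ U m) := by
  intro m
  induction m with
  | zero => exact hU
  | succ m ih =>
    rw [Wseq]
    split_ifs with h
    · exact measurable_Ek ih
    · exact ih

lemma Wseq_mem (hU : Measurable U) (hU2 : MemLp U 2 (Measure.pi μ)) :
    ∀ m, MemLp (Wseq μ U m) 2 (Measure.pi μ) := by
  intro m
  induction m with
  | zero => exact hU2
  | succ m ih =>
    rw [Wseq]
    split_ifs with h
    · exact memℒp_Ek (Wseq_meas hU m) ih
    · exact ih

omit [∀ i, IsProbabilityMeasure (μ i)] in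
lemma Wseq_dep : ∀ (m : ℕ) (ω ω' : ∀ i, Ω i),
    (∀ i : Fin n, m ≤ (i : ℕ) → ω i = ω' i) → Wseq μ U m ω = Wseq μ U m ω' := by
  intro m
  induction m with
  | zero =>
    intro ω ω' h
    have : ω = ω' := funext fun i => h i (Nat.zero_le _)
    rw [this]
  | succ m ih =>
    intro ω ω' h
    rw [Wseq]
    split_ifs with hm
    · show (∫ x, Wseq μ U m (Function.update ω ⟨m, hm⟩ x) ∂(μ ⟨m, hm⟩)) = _
      refine integral_congr_ae (Filter.Eventually.of_forall fun x => ?_)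
      apply ih
      intro i hi
      by_cases hik : i = ⟨m, hm⟩
      · subst hik; simp
      · rw [Function.update_of_ne hik, Function.update_of_ne hik]
        apply h i
        have hne : (i : ℕ) ≠ m := fun hc => hik (Fin.ext hc)
        omega
    · exact ih ω ω' fun i hi => absurd i.isLt (by omega)

lemma Wseq_integral (hU : Measurable U) (hU2 : MemLp U 2 (Measure.pi μ)) :
    ∀ m, ∫ ω, Wseq μ U m ω ∂(Measure.pi μ) = ∫ ω, U ω ∂(Measure.pi μ) := by
  intro m
  induction m with
  | zero => rfl
  | succ m ih =>
    rw [Wseq]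
    split_ifs with h
    · rw [integral_Ek ((Wseq_mem hU hU2 m).integrable one_le_two)]
      exact ih
    · exact ih

lemma telescope (hU : Measurable U) (hU2 : MemLp U 2 (Measure.pi μ)) :
    ∀ m, m ≤ n → ∫ ω, U ω ^ 2 ∂(Measure.pi μ)
      = ∫ ω, Wseq μ U m ω ^ 2 ∂(Measure.pi μ)
        + ∑ j ∈ Finset.range m,
            ∫ ω, (Wseq μ U j ω - Wseq μ U (j + 1) ω) ^ 2 ∂(Measure.pi μ) := by
  intro m
  induction m with
  | zero => simp [Wseq]
  | succ m ih =>
    intro hm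
    have hmn : m < n := Nat.lt_of_succ_le hm
    rw [Finset.sum_range_succ]
    have hp := pythagoras (k := ⟨m, hmn⟩) (Wseq_meas hU m) (Wseq_mem hU hU2 m)
    have hW : Wseq μ U (m + 1) = Ek μ ⟨m, hmn⟩ (Wseq μ U m) := by
      rw [Wseq, dif_pos hmn]
    have hD : ∀ ω, Wseq μ U m ω - Wseq μ U (m + 1) ω
        = Dop μ ⟨m, hmn⟩ (Wseq μ U m) ω := fun ω => by rw [hW]; rfl
    have ihm := ih (Nat.le_of_lt hmn)
    simp_rw [hD, hW]
    linarith [hp, ihm]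

lemma jensen_chain (hU : Measurable U) (hU2 : MemLp U 2 (Measure.pi μ)) (k : Fin n) :
    ∀ m, m ≤ (k : ℕ) →
      ∫ ω, Dop μ k (Wseq μ U m) ω ^ 2 ∂(Measure.pi μ)
        ≤ ∫ ω, Dop μ k U ω ^ 2 ∂(Measure.pi μ) := by
  intro m
  induction m with
  | zero => intro _; exact le_of_eq rfl
  | succ m ih =>
    intro hm
    have hmk : m < (k : ℕ) := Nat.lt_of_succ_le hm
    have hmn : m < n := lt_trans hmk k.isLt
    have hW : Wseq μ U (m + 1) = Ek μ ⟨m, hmn⟩ (Wseq μ U m) := by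
      rw [Wseq, dif_pos hmn]
    have hne : (⟨m, hmn⟩ : Fin n) ≠ k := fun hc =>
      absurd (congrArg Fin.val hc) (by simp; omega)
    calc ∫ ω, Dop μ k (Wseq μ U (m + 1)) ω ^ 2 ∂(Measure.pi μ)
        = ∫ ω, Dop μ k (Ek μ ⟨m, hmn⟩ (Wseq μ U m)) ω ^ 2 ∂(Measure.pi μ) := by rw [hW]
      _ ≤ ∫ ω, Dop μ k (Wseq μ U m) ω ^ 2 ∂(Measure.pi μ) :=
          dop_contract hne (Wseq_meas hU m) (Wseq_mem hU hU2 m)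
      _ ≤ ∫ ω, Dop μ k U ω ^ 2 ∂(Measure.pi μ) := ih (Nat.le_of_lt hmk)

end Aux

/-- Efron–Stein inequality. -/
theorem efron_stein {n : ℕ} {Ω : Fin n → Type*} [∀ i, MeasurableSpace (Ω i)]
    (μ : ∀ i, Measure (Ω i)) [∀ i, IsProbabilityMeasure (μ i)]
    (U : (∀ i, Ω i) → ℝ) (hU : Measurable U) (hU2 : MemLp U 2 (Measure.pi μ)) :
    ∫ ω, |U ω| ^ 2 ∂(Measure.pi μ)
      ≤ |∫ ω, U ω ∂(Measure.pi μ)| ^ 2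
        + ∑ k, ∫ ω, |Dop μ k U ω| ^ 2 ∂(Measure.pi μ) := by
  simp only [sq_abs]
  have htel := telescope hU hU2 n le_rfl
  -- the space is nonempty
  have hne : ∀ i, Nonempty (Ω i) := fun i => by
    by_contra h
    rw [not_nonempty_iff] at h
    have h1 := measure_univ (μ := μ i)
    haveI := h
    rw [Set.univ_eq_empty_iff.2 h, measure_empty] at h1
    exact zero_ne_one h1
  obtain ⟨ω0⟩ : Nonempty (∀ i, Ω i) := ⟨fun i => (hne i).some⟩
  have hconst : ∀ ω, Wseq μ U n ω = Wseq μ U n ω0 := fun ω =>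
    Wseq_dep n ω ω0 fun i hi => absurd i.isLt (by omega)
  have hWn_int : ∫ ω, Wseq μ U n ω ∂(Measure.pi μ) = Wseq μ U n ω0 := by
    rw [integral_congr_ae (Filter.Eventually.of_forall hconst)]
    simp
  have hWn2 : ∫ ω, Wseq μ U n ω ^ 2 ∂(Measure.pi μ)
      = (∫ ω, U ω ∂(Measure.pi μ)) ^ 2 := by
    have h2 : ∫ ω, Wseq μ U n ω ^ 2 ∂(Measure.pi μ) = Wseq μ U n ω0 ^ 2 := by
      rw [integral_congr_ae (Filter.Eventually.of_forall fun ω => by rw [hconst ω])]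
      simp
    rw [h2, ← hWn_int, Wseq_integral hU hU2 n]
  have hsum : ∑ j ∈ Finset.range n,
        ∫ ω, (Wseq μ U j ω - Wseq μ U (j + 1) ω) ^ 2 ∂(Measure.pi μ)
      ≤ ∑ k : Fin n, ∫ ω, Dop μ k U ω ^ 2 ∂(Measure.pi μ) := by
    rw [← Fin.sum_univ_eq_sum_range
      (fun j => ∫ ω, (Wseq μ U j ω - Wseq μ U (j + 1) ω) ^ 2 ∂(Measure.pi μ)) n]
    refine Finset.sum_le_sum fun k _ => ?_
    have hkn : (k : ℕ) < n := k.isLt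
    have hW : Wseq μ U ((k : ℕ) + 1) = Ek μ ⟨(k : ℕ), hkn⟩ (Wseq μ U (k : ℕ)) := by
      rw [Wseq, dif_pos hkn]
    have hfin : (⟨(k : ℕ), hkn⟩ : Fin n) = k := Fin.ext rfl
    have hD : ∀ ω, Wseq μ U (k : ℕ) ω - Wseq μ U ((k : ℕ) + 1) ω
        = Dop μ k (Wseq μ U (k : ℕ)) ω := fun ω => by
      rw [hW, hfin]; rfl
    simp_rw [hD]
    exact jensen_chain hU hU2 k (k : ℕ) le_rfl
  rw [htel, hWn2]
  linarith
end
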